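/- Let (f,g,ρ) be a warped Berger solution of Ricci flow on S^1×S^3 defined on [0,T) with T < ∞, and suppose that liminf_{t↗T} M̌(t) = 0. Then there exists a constant C < ∞ such that M̌(t)² ≤ C(T − t) for all t ∈ [0,T). -/

import Mathlib

open Real Set Filter Topology

noncomputable section

/-- Partial derivative in the first (spatial, `ξ`) variable. -/
def pd1 (φ : ℝ → ℝ → ℝ) (ξ t : ℝ) : ℝ := deriv (fun x => φ x t) ξ

/-- Partial derivative in the second (time) variable: `φ_t`. -/
def pdt (φ : ℝ → ℝ → ℝ) (ξ t : ℝ) : ℝ := deriv (fun τ => φ ξ τ) t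

/-- Derivative with respect to arclength `s` (where `ds = ρ dξ`): `φ_s := ρ⁻¹ ∂_ξ φ`. -/
def Ds (ρ φ : ℝ → ℝ → ℝ) (ξ t : ℝ) : ℝ := pd1 φ ξ t / ρ ξ t

/-- `M(ξ,t) := min {f(ξ,t), g(ξ,t)}`. -/
def M (f g : ℝ → ℝ → ℝ) (ξ t : ℝ) : ℝ := min (f ξ t) (g ξ t)

/-- `M̌(t) := min_{ξ ∈ S¹} M(ξ,t)`. -/
def Mcheck (f g : ℝ → ℝ → ℝ) (t : ℝ) : ℝ := ⨅ ξ : ℝ, M f g ξ t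

/-- A warped Berger solution of Ricci flow on `S¹ × S³` with (finite) existence time `T`:
smooth positive `2π`-periodic-in-`ξ` functions `f, g, ρ` on `S¹ × [0,T)` satisfying
  `f_t = f_ss + 2 (g_s/g) f_s − 2 f³/g⁴`,
  `g_t = g_ss + (f_s/f + g_s/g) g_s + 2 (f² − 2g²)/g³`,
  `(log ρ)_t = f_ss/f + 2 g_ss/g`. -/
structure WarpedBerger (T : ℝ) (f g ρ : ℝ → ℝ → ℝ) : Prop where
  T_pos : 0 < T
  f_pos : ∀ ξ t : ℝ, 0 ≤ t → t < T → 0 < f ξ t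
  g_pos : ∀ ξ t : ℝ, 0 ≤ t → t < T → 0 < g ξ t
  ρ_pos : ∀ ξ t : ℝ, 0 ≤ t → t < T → 0 < ρ ξ t
  f_per : ∀ ξ t : ℝ, f (ξ + 2 * π) t = f ξ t
  g_per : ∀ ξ t : ℝ, g (ξ + 2 * π) t = g ξ t
  ρ_per : ∀ ξ t : ℝ, ρ (ξ + 2 * π) t = ρ ξ t
  smooth : ContDiffOn ℝ (⊤ : ℕ∞)
      (fun p : ℝ × ℝ => (f p.1 p.2, g p.1 p.2, ρ p.1 p.2)) (Set.univ ×ˢ Set.Ico 0 T)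
  eq_f : ∀ ξ t : ℝ, 0 < t → t < T →
    pdt f ξ t = Ds ρ (Ds ρ f) ξ t + 2 * (Ds ρ g ξ t / g ξ t) * Ds ρ f ξ t
      - 2 * (f ξ t) ^ 3 / (g ξ t) ^ 4
  eq_g : ∀ ξ t : ℝ, 0 < t → t < T →
    pdt g ξ t = Ds ρ (Ds ρ g) ξ t
      + (Ds ρ f ξ t / f ξ t + Ds ρ g ξ t / g ξ t) * Ds ρ g ξ t
      + 2 * ((f ξ t) ^ 2 - 2 * (g ξ t) ^ 2) / (g ξ t) ^ 3
  eq_ρ : ∀ ξ t : ℝ, 0 < t → t < T →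
    pdt (fun x τ => Real.log (ρ x τ)) ξ t
      = Ds ρ (Ds ρ f) ξ t / f ξ t + 2 * (Ds ρ (Ds ρ g) ξ t / g ξ t)

/-!
At a point where `M̌(t)` is attained by `f` (so `f ≤ g` there), `f` has a spatial minimum, hence
`f_s = 0` and `f_ss ≥ 0`, and the equation gives `f f_t ≥ -2 f⁴/g⁴ ≥ -2`. Likewise, where it is
attained by `g`, `g g_t ≥ 2 (f² - 2g²)/g² ≥ -2`. So `f²` resp. `g²` at that point is an upper
barrier for `M̌²` with time derivative `≥ -4`, which gives `M̌(t)² ≤ M̌(s)² + 4 (s - t)` for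
`t ≤ s < T`; letting `s` run through times with `M̌(s) → 0` yields `M̌(t)² ≤ 4 (T - t)`.
-/

theorem IsLocalMin.deriv_deriv_nonneg {φ : ℝ → ℝ} {x : ℝ} (hmin : IsLocalMin φ x)
    (hc : ContinuousAt φ x) : 0 ≤ deriv (deriv φ) x := by
  by_contra! hneg
  have hmax : IsLocalMax φ x := isLocalMax_of_deriv_deriv_neg hneg hmin.deriv_eq_zero hc
  have hconst : φ =ᶠ[𝓝 x] fun _ => φ x := by
    filter_upwards [hmin, hmax] with y h₁ h₂ using le_antisymm h₂ h₁
  have hzero : deriv (deriv φ) x = 0 := by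
    rw [hconst.deriv.deriv_eq]
    simp
  exact hneg.ne hzero

theorem IsLocalMax.deriv_deriv_nonpos {φ : ℝ → ℝ} {x : ℝ} (hmax : IsLocalMax φ x)
    (hc : ContinuousAt φ x) : deriv (deriv φ) x ≤ 0 := by
  have h : 0 ≤ deriv (deriv (-φ)) x := hmax.neg.deriv_deriv_nonneg hc.neg
  rwa [deriv.neg', show (fun y => -deriv φ y) = -deriv φ from rfl, deriv.neg, neg_nonneg] at h

theorem eventually_lt_add_mul_of_hasDerivAt {ψ φ : ℝ → ℝ} {t d r : ℝ} (hφ : HasDerivAt φ d t)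
    (hle : ∀ᶠ s in 𝓝[<] t, ψ s ≤ φ s) (heq : φ t = ψ t) (hr : -d < r) :
    ∀ᶠ s in 𝓝[<] t, ψ s < ψ t + r * (t - s) := by
  have hslope : Tendsto (slope φ t) (𝓝[<] t) (𝓝 d) :=
    hasDerivWithinAt_iff_tendsto_slope.mp hφ.hasDerivWithinAt |>.mono_left
      (nhdsWithin_mono _ fun s hs => ⟨hs, ne_of_lt hs⟩)
  filter_upwards [hslope.eventually (lt_mem_nhds (neg_lt.mp hr)), hle, self_mem_nhdsWithin]
    with s hs hψφ hst
  rw [slope_def_field, lt_div_iff_of_neg (sub_neg.mpr hst)] at hs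
  linarith

theorem le_add_mul_sub_of_left_dini {ψ : ℝ → ℝ} {a b C : ℝ} (hab : a ≤ b)
    (hψ : ContinuousOn ψ (Icc a b))
    (hdini : ∀ t ∈ Ioc a b, ∀ r > C, ∃ᶠ s in 𝓝[<] t, ψ s < ψ t + r * (t - s)) :
    ψ a ≤ ψ b + C * (b - a) := by
  -- Mathlib's comparison theorem bounds right Dini derivatives, so reverse time.
  have hcomp := image_le_of_liminf_slope_right_le_deriv_boundary (f := fun u => ψ (-u))
    (a := -b) (b := -a) (B := fun u => ψ b + C * (u + b)) (B' := fun _ => C)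
    (hψ.comp continuousOn_neg fun u hu => ⟨le_neg.mp hu.2, neg_le.mp hu.1⟩)
    (by simp) (by fun_prop)
    (fun u _ => by simpa using (((hasDerivAt_id u).add_const b).const_mul C).hasDerivWithinAt)
    (fun u hu r hr => by
      obtain ⟨t, rfl⟩ : ∃ t, u = -t := ⟨-u, (neg_neg u).symm⟩
      have ht : t ∈ Ioc a b := ⟨neg_lt_neg_iff.mp hu.2, neg_le_neg_iff.mp hu.1⟩
      refine (tendsto_neg_nhdsLT (a := t)).frequently ?_
      refine ((hdini t ht r hr).and_eventually self_mem_nhdsWithin).mono fun s ⟨hs, hst⟩ => ?_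
      rw [slope_def_field, neg_neg, neg_neg, div_lt_iff₀ (by linarith)]
      linarith)
    (right_mem_Icc.mpr (neg_le_neg hab))
  simp only [neg_neg] at hcomp
  linarith

theorem le_add_mul_sub_of_upper_barriers {ψ : ℝ → ℝ} {a T C : ℝ} (hψ : ContinuousOn ψ (Ico a T))
    (hbarrier : ∀ t ∈ Ioo a T, ∃ φ d, HasDerivAt φ d t ∧ -C ≤ d ∧ φ t = ψ t ∧
      ∀ s ∈ Ico a T, ψ s ≤ φ s)
    {t s : ℝ} (ht : a ≤ t) (hts : t ≤ s) (hs : s < T) : ψ t ≤ ψ s + C * (s - t) := by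
  refine le_add_mul_sub_of_left_dini hts (hψ.mono (Icc_subset_Ico ht hs)) fun τ hτ r hr => ?_
  have hτ' : τ ∈ Ioo a T := ⟨ht.trans_lt hτ.1, hτ.2.trans_lt hs⟩
  obtain ⟨φ, d, hφ, hd, heq, hle⟩ := hbarrier τ hτ'
  have hle' : ∀ᶠ u in 𝓝[<] τ, ψ u ≤ φ u :=
    mem_of_superset (Ioo_mem_nhdsLT hτ'.1) fun u hu => hle u ⟨hu.1.le, hu.2.trans hτ'.2⟩
  exact (eventually_lt_add_mul_of_hasDerivAt hφ hle' heq (by linarith)).frequently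

theorem Function.Periodic.exists_iInf_eq {φ : ℝ → ℝ} {p : ℝ} (hper : Function.Periodic φ p)
    (hp : p ≠ 0) (hc : Continuous φ) : ∃ x, ⨅ y, φ y = φ x ∧ ∀ y, φ x ≤ φ y := by
  obtain ⟨_, ⟨x, rfl⟩, hx⟩ := (hper.compact_of_continuous hp hc).exists_isLeast (range_nonempty φ)
  exact ⟨x, IsLeast.csInf_eq ⟨mem_range_self x, hx⟩, fun y => hx (mem_range_self y)⟩

theorem continuousOn_iInf_of_periodic {Φ : ℝ → ℝ → ℝ} {p : ℝ} {S : Set ℝ} (hp : 0 < p)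
    (hper : ∀ t, Function.Periodic (Φ · t) p)
    (hΦ : ContinuousOn (fun q : ℝ × ℝ => Φ q.1 q.2) (univ ×ˢ S)) :
    ContinuousOn (fun t => ⨅ x, Φ x t) S := by
  have hinf : (fun t => ⨅ x, Φ x t) = fun t => sInf ((Φ · t) '' Icc 0 (0 + p)) := by
    funext t
    rw [(hper t).image_Icc hp 0]
    rfl
  rw [hinf, continuousOn_iff_continuous_domRestrict]
  exact isCompact_Icc.continuous_sInf (f := fun (t : S) x => Φ x t)
    (hΦ.comp_continuous (f := fun q : S × ℝ => (q.2, (q.1 : ℝ))) (by fun_prop)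
      fun q => ⟨trivial, q.1.2⟩)

section Slices

variable {Φ : ℝ → ℝ → ℝ} {S : Set ℝ} {n : WithTop ℕ∞}

theorem contDiff_slice (hΦ : ContDiffOn ℝ n (fun q : ℝ × ℝ => Φ q.1 q.2) (univ ×ˢ S)) {t : ℝ}
    (ht : t ∈ S) : ContDiff ℝ n (Φ · t) :=
  hΦ.comp_contDiff (contDiff_id.prodMk contDiff_const) fun _ => ⟨trivial, ht⟩

theorem differentiableAt_time_slice
    (hΦ : ContDiffOn ℝ n (fun q : ℝ × ℝ => Φ q.1 q.2) (univ ×ˢ S)) (hn : n ≠ 0) {t : ℝ}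
    (ht : S ∈ 𝓝 t) (ξ : ℝ) : DifferentiableAt ℝ (Φ ξ ·) t :=
  ((hΦ.contDiffAt (prod_mem_nhds univ_mem ht)).comp t
    (contDiff_const.prodMk contDiff_id).contDiffAt).differentiableAt hn

end Slices

section ArclengthDerivative

variable {ρ φ : ℝ → ℝ → ℝ} {ξ t : ℝ}

theorem Ds_eq_zero_of_isLocalExtr (h : IsLocalExtr (φ · t) ξ) : Ds ρ φ ξ t = 0 := by
  simp [Ds, pd1, h.deriv_eq_zero]

theorem Ds_Ds_eq_of_deriv_eq_zero (hφ : DifferentiableAt ℝ (deriv (φ · t)) ξ)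
    (hρ : DifferentiableAt ℝ (ρ · t) ξ) (hρ0 : ρ ξ t ≠ 0) (hcrit : deriv (φ · t) ξ = 0) :
    Ds ρ (Ds ρ φ) ξ t = deriv (deriv (φ · t)) ξ / ρ ξ t ^ 2 := by
  simp only [Ds, pd1]
  rw [deriv_fun_div hφ hρ hρ0, hcrit, zero_mul, sub_zero]
  field_simp

theorem Ds_Ds_nonneg_of_isLocalMin (hφ : ContDiff ℝ 2 (φ · t)) (hρ : DifferentiableAt ℝ (ρ · t) ξ)
    (hρ0 : ρ ξ t ≠ 0) (hmin : IsLocalMin (φ · t) ξ) : 0 ≤ Ds ρ (Ds ρ φ) ξ t := by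
  rw [Ds_Ds_eq_of_deriv_eq_zero (hφ.differentiable_deriv_two ξ) hρ hρ0 hmin.deriv_eq_zero]
  exact div_nonneg (hmin.deriv_deriv_nonneg hφ.continuous.continuousAt) (sq_nonneg _)

theorem Ds_Ds_nonpos_of_isLocalMax (hφ : ContDiff ℝ 2 (φ · t)) (hρ : DifferentiableAt ℝ (ρ · t) ξ)
    (hρ0 : ρ ξ t ≠ 0) (hmax : IsLocalMax (φ · t) ξ) : Ds ρ (Ds ρ φ) ξ t ≤ 0 := by
  rw [Ds_Ds_eq_of_deriv_eq_zero (hφ.differentiable_deriv_two ξ) hρ hρ0 hmax.deriv_eq_zero]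
  exact div_nonpos_of_nonpos_of_nonneg (hmax.deriv_deriv_nonpos hφ.continuous.continuousAt)
    (sq_nonneg _)

end ArclengthDerivative

namespace WarpedBerger

variable {T : ℝ} {f g ρ : ℝ → ℝ → ℝ} {ξ t : ℝ}

theorem contDiff_slice_f (sol : WarpedBerger T f g ρ) (ht : t ∈ Ico 0 T) :
    ContDiff ℝ 2 (f · t) :=
  (contDiff_slice sol.smooth.fst ht).of_le (by norm_cast)

theorem contDiff_slice_g (sol : WarpedBerger T f g ρ) (ht : t ∈ Ico 0 T) :
    ContDiff ℝ 2 (g · t) :=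
  (contDiff_slice sol.smooth.snd.fst ht).of_le (by norm_cast)

theorem differentiableAt_slice_ρ (sol : WarpedBerger T f g ρ) (ht : t ∈ Ico 0 T) :
    DifferentiableAt ℝ (ρ · t) ξ :=
  (contDiff_slice sol.smooth.snd.snd ht).differentiable (by simp) ξ

theorem hasDerivAt_f (sol : WarpedBerger T f g ρ) (ht : t ∈ Ioo 0 T) (ξ : ℝ) :
    HasDerivAt (f ξ ·) (pdt f ξ t) t :=
  (differentiableAt_time_slice sol.smooth.fst (by simp) (Ico_mem_nhds ht.1 ht.2) ξ).hasDerivAt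

theorem hasDerivAt_g (sol : WarpedBerger T f g ρ) (ht : t ∈ Ioo 0 T) (ξ : ℝ) :
    HasDerivAt (g ξ ·) (pdt g ξ t) t :=
  (differentiableAt_time_slice sol.smooth.snd.fst (by simp) (Ico_mem_nhds ht.1 ht.2) ξ).hasDerivAt

theorem le_pdt_f_of_isLocalMin (sol : WarpedBerger T f g ρ) (ht : t ∈ Ioo 0 T)
    (hmin : IsLocalMin (f · t) ξ) : -(2 * f ξ t ^ 3 / g ξ t ^ 4) ≤ pdt f ξ t := by
  have ht' : t ∈ Ico 0 T := Ioo_subset_Ico_self ht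
  have hss := Ds_Ds_nonneg_of_isLocalMin (sol.contDiff_slice_f ht')
    (sol.differentiableAt_slice_ρ ht') (sol.ρ_pos ξ t ht'.1 ht'.2).ne' hmin
  rw [sol.eq_f ξ t ht.1 ht.2, Ds_eq_zero_of_isLocalExtr hmin.isExtr]
  linarith

theorem pdt_f_nonpos_of_isLocalMax (sol : WarpedBerger T f g ρ) (ht : t ∈ Ioo 0 T)
    (hmax : IsLocalMax (f · t) ξ) : pdt f ξ t ≤ 0 := by
  have ht' : t ∈ Ico 0 T := Ioo_subset_Ico_self ht
  have hss := Ds_Ds_nonpos_of_isLocalMax (sol.contDiff_slice_f ht')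
    (sol.differentiableAt_slice_ρ ht') (sol.ρ_pos ξ t ht'.1 ht'.2).ne' hmax
  have hreaction : 0 ≤ 2 * f ξ t ^ 3 / g ξ t ^ 4 := by
    have := sol.f_pos ξ t ht'.1 ht'.2
    positivity
  rw [sol.eq_f ξ t ht.1 ht.2, Ds_eq_zero_of_isLocalExtr hmax.isExtr]
  linarith

theorem le_pdt_g_of_isLocalMin (sol : WarpedBerger T f g ρ) (ht : t ∈ Ioo 0 T)
    (hmin : IsLocalMin (g · t) ξ) : 2 * (f ξ t ^ 2 - 2 * g ξ t ^ 2) / g ξ t ^ 3 ≤ pdt g ξ t := by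
  have ht' : t ∈ Ico 0 T := Ioo_subset_Ico_self ht
  have hss := Ds_Ds_nonneg_of_isLocalMin (sol.contDiff_slice_g ht')
    (sol.differentiableAt_slice_ρ ht') (sol.ρ_pos ξ t ht'.1 ht'.2).ne' hmin
  rw [sol.eq_g ξ t ht.1 ht.2, Ds_eq_zero_of_isLocalExtr hmin.isExtr]
  linarith

theorem neg_two_le_f_mul_pdt_f (sol : WarpedBerger T f g ρ) (ht : t ∈ Ioo 0 T)
    (hmin : IsLocalMin (f · t) ξ) (hfg : f ξ t ≤ g ξ t) : -2 ≤ f ξ t * pdt f ξ t := by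
  have hf := sol.f_pos ξ t ht.1.le ht.2
  have hg := sol.g_pos ξ t ht.1.le ht.2
  have hratio : f ξ t ^ 4 / g ξ t ^ 4 ≤ 1 :=
    div_le_one_of_le₀ (pow_le_pow_left₀ hf.le hfg 4) (by positivity)
  calc -2 ≤ -2 * (f ξ t ^ 4 / g ξ t ^ 4) := by linarith
    _ = f ξ t * -(2 * f ξ t ^ 3 / g ξ t ^ 4) := by ring
    _ ≤ f ξ t * pdt f ξ t := mul_le_mul_of_nonneg_left (sol.le_pdt_f_of_isLocalMin ht hmin) hf.le

theorem neg_two_le_g_mul_pdt_g (sol : WarpedBerger T f g ρ) (ht : t ∈ Ioo 0 T)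
    (hmin : IsLocalMin (g · t) ξ) (hgf : g ξ t ≤ f ξ t) : -2 ≤ g ξ t * pdt g ξ t := by
  have hg := sol.g_pos ξ t ht.1.le ht.2
  have hsq : g ξ t ^ 2 ≤ f ξ t ^ 2 := pow_le_pow_left₀ hg.le hgf 2
  calc -2 ≤ 2 * (f ξ t ^ 2 - 2 * g ξ t ^ 2) / g ξ t ^ 2 := by
        rw [le_div_iff₀ (by positivity)]
        linarith
    _ = g ξ t * (2 * (f ξ t ^ 2 - 2 * g ξ t ^ 2) / g ξ t ^ 3) := by
        field_simp
    _ ≤ g ξ t * pdt g ξ t := mul_le_mul_of_nonneg_left (sol.le_pdt_g_of_isLocalMin ht hmin) hg.le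

theorem M_pos (sol : WarpedBerger T f g ρ) (ht : t ∈ Ico 0 T) (ξ : ℝ) : 0 < M f g ξ t :=
  lt_min (sol.f_pos ξ t ht.1 ht.2) (sol.g_pos ξ t ht.1 ht.2)

theorem Mcheck_le_M (sol : WarpedBerger T f g ρ) (ht : t ∈ Ico 0 T) (ξ : ℝ) :
    Mcheck f g t ≤ M f g ξ t :=
  ciInf_le ⟨0, by rintro _ ⟨y, rfl⟩; exact (sol.M_pos ht y).le⟩ ξ

theorem exists_Mcheck_eq (sol : WarpedBerger T f g ρ) (ht : t ∈ Ico 0 T) :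
    ∃ ξ, Mcheck f g t = M f g ξ t ∧ ∀ y, M f g ξ t ≤ M f g y t :=
  Function.Periodic.exists_iInf_eq (fun ξ => by simp only [M, sol.f_per, sol.g_per])
    two_pi_pos.ne' ((sol.contDiff_slice_f ht).continuous.min (sol.contDiff_slice_g ht).continuous)

theorem Mcheck_pos (sol : WarpedBerger T f g ρ) (ht : t ∈ Ico 0 T) : 0 < Mcheck f g t := by
  obtain ⟨ξ, hξ, -⟩ := sol.exists_Mcheck_eq ht
  exact hξ ▸ sol.M_pos ht ξ

theorem continuousOn_Mcheck (sol : WarpedBerger T f g ρ) : ContinuousOn (Mcheck f g) (Ico 0 T) :=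
  continuousOn_iInf_of_periodic two_pi_pos (fun t ξ => by simp only [M, sol.f_per, sol.g_per])
    (sol.smooth.fst.continuousOn.inf sol.smooth.snd.fst.continuousOn)

theorem exists_Mcheck_sq_barrier (sol : WarpedBerger T f g ρ) (ht : t ∈ Ioo 0 T) :
    ∃ φ d, HasDerivAt φ d t ∧ -4 ≤ d ∧ φ t = Mcheck f g t ^ 2 ∧
      ∀ s ∈ Ico 0 T, Mcheck f g s ^ 2 ≤ φ s := by
  obtain ⟨ξ, hξ, hmin⟩ := sol.exists_Mcheck_eq (Ioo_subset_Ico_self ht)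
  have hsq {u : ℝ → ℝ → ℝ} (hu : ∀ s ∈ Ico 0 T, Mcheck f g s ≤ u ξ s) (s : ℝ) (hs : s ∈ Ico 0 T) :
      Mcheck f g s ^ 2 ≤ u ξ s ^ 2 :=
    pow_le_pow_left₀ (sol.Mcheck_pos hs).le (hu s hs) 2
  rcases le_total (f ξ t) (g ξ t) with hfg | hgf
  · have hMf : M f g ξ t = f ξ t := min_eq_left hfg
    have hfmin : IsLocalMin (f · t) ξ :=
      Eventually.of_forall fun y => hMf.ge.trans ((hmin y).trans (min_le_left _ _))
    refine ⟨(f ξ · ^ 2), 2 * (f ξ t * pdt f ξ t), ((sol.hasDerivAt_f ht ξ).pow 2).congr_deriv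
      (by ring), by linarith [sol.neg_two_le_f_mul_pdt_f ht hfmin hfg], by rw [hξ, hMf],
      hsq fun s hs => (sol.Mcheck_le_M hs ξ).trans (min_le_left _ _)⟩
  · have hMg : M f g ξ t = g ξ t := min_eq_right hgf
    have hgmin : IsLocalMin (g · t) ξ :=
      Eventually.of_forall fun y => hMg.ge.trans ((hmin y).trans (min_le_right _ _))
    refine ⟨(g ξ · ^ 2), 2 * (g ξ t * pdt g ξ t), ((sol.hasDerivAt_g ht ξ).pow 2).congr_deriv
      (by ring), by linarith [sol.neg_two_le_g_mul_pdt_g ht hgmin hgf], by rw [hξ, hMg],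
      hsq fun s hs => (sol.Mcheck_le_M hs ξ).trans (min_le_right _ _)⟩

theorem Mcheck_sq_le_add (sol : WarpedBerger T f g ρ) {s : ℝ} (ht : 0 ≤ t) (hts : t ≤ s)
    (hs : s < T) : Mcheck f g t ^ 2 ≤ Mcheck f g s ^ 2 + 4 * (s - t) :=
  le_add_mul_sub_of_upper_barriers (sol.continuousOn_Mcheck.pow 2)
    (fun _ hτ => sol.exists_Mcheck_sq_barrier hτ) ht hts hs

theorem exists_forall_f_le (sol : WarpedBerger T f g ρ) :
    ∃ ξ₀, ∀ ξ, ∀ s ∈ Ico 0 T, f ξ s ≤ f ξ₀ 0 := by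
  have hper (t : ℝ) : Function.Periodic (fun ξ => -f ξ t) (2 * π) := fun ξ => by
    simp only [sol.f_per]
  have hmin (t : ℝ) (ht : t ∈ Ico 0 T) : ∃ ξ, ⨅ y, -f y t = -f ξ t ∧ ∀ y, -f ξ t ≤ -f y t :=
    (hper t).exists_iInf_eq two_pi_pos.ne' (sol.contDiff_slice_f ht).continuous.neg
  obtain ⟨ξ₀, hξ₀, -⟩ := hmin 0 ⟨le_rfl, sol.T_pos⟩
  refine ⟨ξ₀, fun ξ s hs => ?_⟩
  -- `t ↦ ⨅ y, -f y t = -max f(·, t)` is nondecreasing.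
  have hmono : ⨅ y, -f y 0 ≤ (⨅ y, -f y s) + 0 * (s - 0) :=
    le_add_mul_sub_of_upper_barriers (ψ := fun t => ⨅ y, -f y t) (C := 0)
      (continuousOn_iInf_of_periodic two_pi_pos hper sol.smooth.fst.continuousOn.neg)
      (fun t ht => by
        obtain ⟨η, hη, hηmin⟩ := hmin t (Ioo_subset_Ico_self ht)
        have hmax : IsLocalMax (f · t) η :=
          Eventually.of_forall fun y => neg_le_neg_iff.mp (hηmin y)
        refine ⟨(-f η ·), -pdt f η t, (sol.hasDerivAt_f ht η).neg,
          by linarith [sol.pdt_f_nonpos_of_isLocalMax ht hmax], hη.symm, fun u hu => ?_⟩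
        obtain ⟨ζ, hζ, hζmin⟩ := hmin u hu
        exact hζ ▸ hζmin η)
      le_rfl hs.1 hs.2
  obtain ⟨η, hη, hηmin⟩ := hmin s hs
  rw [hξ₀, hη, zero_mul, add_zero] at hmono
  linarith [hηmin ξ]

/-- `Filter.liminf` takes the junk value `0` for functions unbounded above, so the hypothesis
`liminf M̌ = 0` has content only together with the maximum principle for `f`. -/
theorem frequently_Mcheck_lt (sol : WarpedBerger T f g ρ)
    (hM : liminf (fun t => Mcheck f g t) (𝓝[<] T) = 0) {ε : ℝ} (hε : 0 < ε) :
    ∃ᶠ s in 𝓝[<] T, Mcheck f g s < ε := by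
  obtain ⟨ξ₀, hξ₀⟩ := sol.exists_forall_f_le
  have hbdd : ∀ᶠ s in 𝓝[<] T, Mcheck f g s ≤ f ξ₀ 0 :=
    eventually_of_mem (Ico_mem_nhdsLT sol.T_pos) fun s hs =>
      (sol.Mcheck_le_M hs 0).trans ((min_le_left _ _).trans (hξ₀ 0 s hs))
  exact frequently_lt_of_liminf_lt (isCoboundedUnder_ge_of_eventually_le _ hbdd) (hM ▸ hε)

end WarpedBerger

/-- If the smallest radius `M̌(t)` tends to zero along some sequence of
times approaching the finite time `T`, then `M̌(t)² ≤ C (T − t)` for a uniform constant `C`. -/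
theorem neck_radius_upper_bound (T : ℝ) (f g ρ : ℝ → ℝ → ℝ)
    (sol : WarpedBerger T f g ρ)
    (hM : Filter.liminf (fun t => Mcheck f g t) (𝓝[<] T) = 0) :
    ∃ C : ℝ, ∀ t : ℝ, 0 ≤ t → t < T → (Mcheck f g t) ^ 2 ≤ C * (T - t) := by
  refine ⟨4, fun t ht htT => le_of_forall_pos_le_add fun δ hδ => ?_⟩
  obtain ⟨s, hs, hts, hsT⟩ :=
    ((sol.frequently_Mcheck_lt hM (sqrt_pos.mpr hδ)).and_eventually (Ico_mem_nhdsLT htT)).exists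
  have hsmall : Mcheck f g s ^ 2 < δ := (lt_sqrt (sol.Mcheck_pos ⟨ht.trans hts, hsT⟩).le).mp hs
  linarith [sol.Mcheck_sq_le_add ht hts hsT]
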